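/- arXiv:1007.2213 — 2 statements merged into one kernel-verified Lean document; each statement's English description precedes it below -/
import Mathlib

section
/- For positive integers n and k with k ≥ 2, if the Tate twist r of the n-th symmetric power of a weight-k ordinary modular Galois representation is exceptional and critical (i.e., the multiset of Hodge–Tate-type exponents { j(k-1) + r : 0 ≤ j ≤ n } contains 0 coming from an unramified graded piece with unit Frobenius eigenvalue, which by the Hasse/Weil bounds forces the diagonal character to be trivial times cyclotomic to the power 0 exactly when j(k-1) + r = 0 with j = n/2), then n ≡ 2 (mod 4), r = (n/2)(1-k) or r = (n/2)(1-k)+1, and k is even. -/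
open Finset

/-!
Trivial Frobenius on the exceptional piece forces `n = 2j`. Since `i ↦ i(k-1) + r` is strictly
increasing, the pieces with non-positive exponent are exactly `i ≤ j` (when `j(k-1) + r = 0`) or
`i < j` (when it is `1`), so criticality pins down the parity of `r`, and in both cases
`j(k-1)` is odd. Hence `j` is odd and `k` is even.
-/

theorem card_filter_odd_add_range (m : ℕ) (r : ℤ) :
    ((range (2 * m + 1)).filter fun i : ℕ => Odd ((i : ℤ) + r)).card =
      if Odd r then m + 1 else m := by
  induction m with
  | zero => simp [filter_singleton, apply_ite]
  | succ m ih =>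
    rw [card_filter] at ih ⊢
    rw [show 2 * (m + 1) + 1 = 2 * m + 1 + 1 + 1 by ring, sum_range_succ, sum_range_succ, ih]
    simp only [Int.odd_iff, Nat.cast_add, Nat.cast_mul, Nat.cast_one, Nat.cast_ofNat]
    split_ifs <;> omega

theorem filter_range_le_eq_range_of_strictMono {α : Type*} [LinearOrder α] {f : ℕ → α}
    (hf : StrictMono f) {j n : ℕ} (hj : j ≤ n) :
    {i ∈ range (n + 1) | f i ≤ f j} = range (j + 1) := by
  ext i
  simp only [mem_filter, mem_range, hf.le_iff_le]
  omega

theorem filter_range_lt_eq_range_of_strictMono {α : Type*} [LinearOrder α] {f : ℕ → α}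
    (hf : StrictMono f) {j n : ℕ} (hj : j ≤ n) :
    {i ∈ range (n + 1) | f i < f j} = range j := by
  ext i
  simp only [mem_filter, mem_range, hf.lt_iff_lt]
  omega

theorem odd_mul_of_critical {c r : ℤ} (hc : 0 < c) {j : ℕ}
    (hexc : j * c + r = 0 ∨ j * c + r = 1)
    (hcrit : ((range (2 * j + 1)).filter fun i : ℕ => (i : ℤ) * c + r ≤ 0).card =
      ((range (2 * j + 1)).filter fun i : ℕ => Odd ((i : ℤ) + r)).card) :
    Odd (j * c) := by
  have hf : StrictMono fun i : ℕ => (i : ℤ) * c + r := fun a b hab => by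
    simpa using mul_lt_mul_of_pos_right (Nat.cast_lt.mpr hab) hc
  have hj : j ≤ 2 * j := by omega
  rw [card_filter_odd_add_range] at hcrit
  rcases hexc with h0 | h1
  · have hr : Odd r := by
      simp_rw [← h0, filter_range_le_eq_range_of_strictMono hf hj, card_range] at hcrit
      by_contra h
      rw [if_neg h] at hcrit
      omega
    rw [show (j : ℤ) * c = -r by omega]
    exact hr.neg
  · have hr : ¬ Odd r := by
      simp_rw [Int.le_iff_lt_add_one, zero_add, ← h1,
        filter_range_lt_eq_range_of_strictMono hf hj, card_range] at hcrit
      intro h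
      rw [if_pos h] at hcrit
      omega
    rw [show (j : ℤ) * c = 1 - r by omega]
    exact Int.odd_sub.mpr (by simpa using hr)

theorem exceptional_critical_twists_general {K : Type*} [Field K] (n k : ℕ) (r : ℤ) (α : Kˣ)
    (hk : 2 ≤ k)
    (hα : ∀ t : ℤ, t ≠ 0 → α ^ t ≠ 1)
    (hexc : ∃ j : ℕ, j ≤ n ∧ ((j : ℤ) * ((k : ℤ) - 1) + r = 0 ∨
      (j : ℤ) * ((k : ℤ) - 1) + r = 1) ∧ α ^ ((n : ℤ) - 2 * (j : ℤ)) = 1)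
    (hcrit : ((Finset.range (n + 1)).filter
        (fun (j : ℕ) => (j : ℤ) * ((k : ℤ) - 1) + r ≤ 0)).card =
      ((Finset.range (n + 1)).filter (fun (j : ℕ) => Odd ((j : ℤ) + r))).card) :
    n % 4 = 2 ∧ Even k ∧
      (r = ((n / 2 : ℕ) : ℤ) * (1 - (k : ℤ)) ∨
        r = ((n / 2 : ℕ) : ℤ) * (1 - (k : ℤ)) + 1) := by
  obtain ⟨j, -, hjr, hαj⟩ := hexc
  obtain rfl : n = 2 * j := by
    have := not_imp_not.mp (hα _) hαj
    omega
  have hodd : Odd ((j : ℤ) * ((k : ℤ) - 1)) :=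
    odd_mul_of_critical (by omega) hjr (by simpa using hcrit)
  obtain ⟨hj, hk1⟩ := Int.odd_mul.mp hodd
  refine ⟨?_, (Int.even_coe_nat k).mp (odd_sub_one.mp hk1), ?_⟩
  · rw [Int.odd_coe_nat, Nat.odd_iff] at hj
    omega
  · rw [Nat.mul_div_cancel_left j two_pos]
    rcases hjr with h | h
    · left; linarith
    · right; linarith

/-- Combinatorial version of the determination of exceptional, critical Tate twists of
`Sym^n ρ_f`.  The ordinary filtration of `Sym^n ρ_f (r)` has graded pieces on which inertia
acts by `χ^(j(k-1)+r)` and Frobenius acts by `α^(n-2j)` (up to powers of `p`), where `α` is a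
`p`-adic unit with `α^t ≠ 1` for `t ≠ 0` (Weil bounds).  Exceptionality says some graded piece
has `j(k-1)+r = 0` (exceptional subquotient `K`) or `j(k-1)+r = 1` (exceptional subquotient
`K(1)`) together with trivial Frobenius action `α^(n-2j) = 1`.  Criticality says
`dim V/F¹V = dim V⁻`, i.e. the number of `j` with `j(k-1)+r ≤ 0` equals the number of `j`
with `j + r` odd.  Conclusion: `n ≡ 2 (mod 4)`, `k` is even, and
`r = (n/2)(1-k)` or `r = (n/2)(1-k) + 1`. -/
theorem exceptional_critical_twists {K : Type*} [Field K] (n k : ℕ) (r : ℤ) (α : Kˣ)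
    (hn : 0 < n) (hk : 2 ≤ k)
    (hα : ∀ t : ℤ, t ≠ 0 → α ^ t ≠ 1)
    (hexc : ∃ j : ℕ, j ≤ n ∧ ((j : ℤ) * ((k : ℤ) - 1) + r = 0 ∨
      (j : ℤ) * ((k : ℤ) - 1) + r = 1) ∧ α ^ ((n : ℤ) - 2 * (j : ℤ)) = 1)
    (hcrit : ((Finset.range (n + 1)).filter
        (fun (j : ℕ) => (j : ℤ) * ((k : ℤ) - 1) + r ≤ 0)).card =
      ((Finset.range (n + 1)).filter (fun (j : ℕ) => Odd ((j : ℤ) + r))).card) :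
    n % 4 = 2 ∧ Even k ∧
      (r = ((n / 2 : ℕ) : ℤ) * (1 - (k : ℤ)) ∨
        r = ((n / 2 : ℕ) : ℤ) * (1 - (k : ℤ)) + 1) :=
  exceptional_critical_twists_general n k r α hk hα hexc hcrit
end

section
/- Conversely, if c: G → M_n(K) is a 1-cocycle for the adjoint action of ρ, then g ↦ ρ(g)(1 + ε c(g)) defines a group homomorphism G → GL_n(K[ε]) lifting ρ, and two such cocycles define K[ε]-conjugate lifts if and only if they differ by a coboundary g ↦ Ad(ρ(g)^{-1})X − X. -/
/-!
Over `K[ε]` every matrix is `A + εB` with `ε² = 0`, so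
`(A + εB)(A' + εB') = AA' + ε(AB' + BA')`.
Since `ρ(g)(1 + εc(g)) = ρ(g) + ερ(g)c(g)`, multiplicativity of the lift says that
`g ↦ ρ(g)c(g)` satisfies a Leibniz rule, which is the cocycle identity multiplied by `ρ(gh)`;
invertibility is then automatic because the lift is a homomorphism out of a group.
Comparing `ε`-parts of `(1 + εX)ρ(g)(1 + εc₁(g)) = ρ(g)(1 + εc₂(g))(1 + εX)` gives
`ρ(g)c₁(g) + Xρ(g) = ρ(g)X + ρ(g)c₂(g)`, i.e. `c₂(g) - c₁(g) = ρ(g)⁻¹Xρ(g) - X`.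
-/

open Matrix

def cocycleLift {K G : Type*} [CommRing K] [Group G] {n : ℕ}
    (ρ : G →* GL (Fin n) K) (c : G → Matrix (Fin n) (Fin n) K) :
    G → Matrix (Fin n) (Fin n) (DualNumber K) := fun g =>
  ((ρ g : Matrix (Fin n) (Fin n) K)).map (TrivSqZeroExt.inl : K → DualNumber K) *
    (1 + (c g).map (TrivSqZeroExt.inr : K → DualNumber K))

open TrivSqZeroExt

namespace Matrix

variable {m R : Type*} [Semiring R]

theorem map_inl_add_map_inr_mul [Fintype m] (a b a' b' : Matrix m m R) :
    (a.map (inl : R → DualNumber R) + b.map inr) * (a'.map inl + b'.map inr) =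
      (a * a').map inl + (a * b' + b * a').map inr := by
  ext i j <;> simp [mul_apply, fst_sum, snd_sum, Finset.sum_add_distrib]

theorem map_inl_add_map_inr_inj {a b a' b' : Matrix m m R} :
    a.map (inl : R → DualNumber R) + b.map inr = a'.map inl + b'.map inr ↔
      a = a' ∧ b = b' := by
  refine ⟨fun h => ⟨?_, ?_⟩, fun ⟨ha, hb⟩ => ha ▸ hb ▸ rfl⟩ <;> ext i j
  · simpa using congrArg fst (congrFun₂ h i j)
  · simpa using congrArg snd (congrFun₂ h i j)

theorem map_fst_map_inl_add_map_inr (a b : Matrix m m R) :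
    (a.map (inl : R → DualNumber R) + b.map inr).map fst = a := by
  ext i j; simp

variable [DecidableEq m]

theorem map_inl_mul_one_add_map_inr [Fintype m] (a b : Matrix m m R) :
    a.map (inl : R → DualNumber R) * (1 + b.map inr) = a.map inl + (a * b).map inr := by
  ext i j <;> simp [mul_apply, one_apply, mul_add, fst_sum, snd_sum, Finset.sum_add_distrib]

theorem one_add_map_inr (b : Matrix m m R) :
    1 + b.map (inr : R → DualNumber R) = (1 : Matrix m m R).map inl + b.map inr := by
  rw [Matrix.map_one _ (inl_zero R) (inl_one R)]

end Matrix

theorem Units.mul_add_mul_eq_mul_add_mul_iff {R : Type*} [Ring R] (u : Rˣ) (a b x : R) :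
    u * a + x * u = u * x + u * b ↔ b - a = ↑u⁻¹ * x * u - x := by
  have hl : (u : R) * a + x * u = u * (a + ↑u⁻¹ * x * u) := by
    rw [mul_add, ← mul_assoc, ← mul_assoc, Units.mul_inv, one_mul]
  rw [hl, ← mul_add, Units.mul_right_inj, sub_eq_sub_iff_add_eq_add, add_comm b, add_comm a,
    eq_comm]

section Cocycle

variable {K G m : Type*} [Ring K] [Group G] [Fintype m] [DecidableEq m]

def IsAdjointCocycle (ρ : G →* GL m K) (c : G → Matrix m m K) : Prop :=
  ∀ g h, c (g * h) = (ρ h⁻¹ : Matrix m m K) * c g * ρ h + c h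

variable {ρ : G →* GL m K} {c : G → Matrix m m K}

theorem IsAdjointCocycle.apply_one (hc : IsAdjointCocycle ρ c) : c 1 = 0 := by
  simpa using hc 1 1

theorem IsAdjointCocycle.leibniz (hc : IsAdjointCocycle ρ c) (g h : G) :
    (ρ (g * h) : Matrix m m K) * c (g * h) = ρ g * (ρ h * c h) + ρ g * c g * ρ h := by
  have hρ : (ρ (g * h) : Matrix m m K) * ρ h⁻¹ = ρ g := by
    rw [← Units.val_mul, ← map_mul, mul_inv_cancel_right]
  rw [hc, mul_add, ← mul_assoc, ← mul_assoc, hρ, map_mul, Units.val_mul, mul_assoc _ _ (c h),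
    add_comm]

end Cocycle

section Lift

variable {K G : Type*} [CommRing K] [Group G] {n : ℕ} (ρ : G →* GL (Fin n) K)
  (c : G → Matrix (Fin n) (Fin n) K)

theorem cocycleLift_apply (g : G) :
    cocycleLift ρ c g = (ρ g : Matrix (Fin n) (Fin n) K).map inl + (ρ g * c g).map inr :=
  map_inl_mul_one_add_map_inr _ _

theorem map_fst_cocycleLift (g : G) : (cocycleLift ρ c g).map fst = ρ g := by
  rw [cocycleLift_apply, map_fst_map_inl_add_map_inr]

variable {ρ c}

theorem cocycleLift_mul (hc : IsAdjointCocycle ρ c) (g h : G) :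
    cocycleLift ρ c (g * h) = cocycleLift ρ c g * cocycleLift ρ c h := by
  rw [cocycleLift_apply, cocycleLift_apply, cocycleLift_apply, hc.leibniz,
    map_inl_add_map_inr_mul, map_mul, Units.val_mul]

theorem cocycleLift_one (hc : IsAdjointCocycle ρ c) : cocycleLift ρ c 1 = 1 := by
  rw [cocycleLift_apply, hc.apply_one, mul_zero, map_one, Units.val_one, ← one_add_map_inr,
    Matrix.map_zero _ (inr_zero K), add_zero]

def cocycleLiftHom (hc : IsAdjointCocycle ρ c) : G →* Matrix (Fin n) (Fin n) (DualNumber K) where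
  toFun := cocycleLift ρ c
  map_one' := cocycleLift_one hc
  map_mul' := cocycleLift_mul hc

theorem one_add_map_inr_mul_cocycleLift_eq_iff {c₁ c₂ : G → Matrix (Fin n) (Fin n) K}
    (X : Matrix (Fin n) (Fin n) K) (g : G) :
    (1 + X.map inr) * cocycleLift ρ c₁ g = cocycleLift ρ c₂ g * (1 + X.map inr) ↔
      c₂ g - c₁ g = (ρ g⁻¹ : Matrix (Fin n) (Fin n) K) * X * ρ g - X := by
  simp only [cocycleLift_apply, one_add_map_inr, map_inl_add_map_inr_mul, map_inl_add_map_inr_inj,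
    map_inv, one_mul, mul_one, true_and, Units.mul_add_mul_eq_mul_add_mul_iff]

end Lift

theorem cocycle_gives_lift_and_conjugacy_general {K G : Type*} [CommRing K] [Group G] {n : ℕ}
    (ρ : G →* GL (Fin n) K) (c c₁ c₂ : G → Matrix (Fin n) (Fin n) K)
    (hc : ∀ g h : G, c (g * h) =
      (↑(ρ h⁻¹) : Matrix (Fin n) (Fin n) K) * c g * (↑(ρ h) : Matrix (Fin n) (Fin n) K) + c h) :
    (∀ g h : G, cocycleLift ρ c (g * h) = cocycleLift ρ c g * cocycleLift ρ c h) ∧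
    cocycleLift ρ c 1 = 1 ∧
    (∀ g : G, IsUnit (cocycleLift ρ c g)) ∧
    (∀ g : G, (cocycleLift ρ c g).map (TrivSqZeroExt.fst : DualNumber K → K) =
      (↑(ρ g) : Matrix (Fin n) (Fin n) K)) ∧
    ((∃ X : Matrix (Fin n) (Fin n) K, ∀ g : G,
        (1 + X.map (TrivSqZeroExt.inr : K → DualNumber K)) * cocycleLift ρ c₁ g =
          cocycleLift ρ c₂ g * (1 + X.map (TrivSqZeroExt.inr : K → DualNumber K))) ↔
      (∃ X : Matrix (Fin n) (Fin n) K, ∀ g : G,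
        c₂ g - c₁ g =
          (↑(ρ g⁻¹) : Matrix (Fin n) (Fin n) K) * X * (↑(ρ g) : Matrix (Fin n) (Fin n) K) - X)) := by
  have hc : IsAdjointCocycle ρ c := hc
  exact ⟨cocycleLift_mul hc, cocycleLift_one hc,
    fun g => (Group.isUnit g).map (cocycleLiftHom hc), map_fst_cocycleLift ρ c,
    exists_congr fun X => forall_congr' (one_add_map_inr_mul_cocycleLift_eq_iff X)⟩

/-- Converse of the deformation–cocycle correspondence: if `c` is a 1-cocycle for the adjoint
action of `ρ` (i.e. `c(gh) = ρ(h)⁻¹ c(g) ρ(h) + c(h)`), then `g ↦ ρ(g)(1 + ε c(g))` is a group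
homomorphism `G → GLₙ(K[ε])` lifting `ρ` (each value is invertible, reducing mod `ε` gives back
`ρ`); and two cocycles `c₁, c₂` define `K[ε]`-conjugate lifts (conjugate by a matrix `1 + εX`)
if and only if they differ by a coboundary `g ↦ ρ(g)⁻¹ X ρ(g) − X`. -/
theorem cocycle_gives_lift_and_conjugacy {K G : Type*} [CommRing K] [Group G] {n : ℕ}
    (ρ : G →* GL (Fin n) K) (c c₁ c₂ : G → Matrix (Fin n) (Fin n) K)
    (hc : ∀ g h : G, c (g * h) =
      (↑(ρ h⁻¹) : Matrix (Fin n) (Fin n) K) * c g * (↑(ρ h) : Matrix (Fin n) (Fin n) K) + c h)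
    (hc₁ : ∀ g h : G, c₁ (g * h) =
      (↑(ρ h⁻¹) : Matrix (Fin n) (Fin n) K) * c₁ g * (↑(ρ h) : Matrix (Fin n) (Fin n) K) + c₁ h)
    (hc₂ : ∀ g h : G, c₂ (g * h) =
      (↑(ρ h⁻¹) : Matrix (Fin n) (Fin n) K) * c₂ g * (↑(ρ h) : Matrix (Fin n) (Fin n) K) + c₂ h) :
    (∀ g h : G, cocycleLift ρ c (g * h) = cocycleLift ρ c g * cocycleLift ρ c h) ∧
    cocycleLift ρ c 1 = 1 ∧
    (∀ g : G, IsUnit (cocycleLift ρ c g)) ∧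
    (∀ g : G, (cocycleLift ρ c g).map (TrivSqZeroExt.fst : DualNumber K → K) =
      (↑(ρ g) : Matrix (Fin n) (Fin n) K)) ∧
    ((∃ X : Matrix (Fin n) (Fin n) K, ∀ g : G,
        (1 + X.map (TrivSqZeroExt.inr : K → DualNumber K)) * cocycleLift ρ c₁ g =
          cocycleLift ρ c₂ g * (1 + X.map (TrivSqZeroExt.inr : K → DualNumber K))) ↔
      (∃ X : Matrix (Fin n) (Fin n) K, ∀ g : G,
        c₂ g - c₁ g =
          (↑(ρ g⁻¹) : Matrix (Fin n) (Fin n) K) * X * (↑(ρ g) : Matrix (Fin n) (Fin n) K) - X)) :=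
  cocycle_gives_lift_and_conjugacy_general ρ c c₁ c₂ hc
end
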